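/- arXiv:2012.03436 — 2 statements merged into one kernel-verified Lean document; each statement's English description precedes it below -/
import Mathlib

section
/- Let d ≥ 2, let q = 1/m for a positive integer m, and set p₂ = 2q/(2 + qd − q). For nonnegative reals a_1, …, a_d with product λ, one has p₂·((2/q)·a_1^q + ∑_{j=2}^d a_j²) ≥ λ^{p₂}. -/
/-!
Weighted AM-GM with weight `p₂/q` on `a₁^q` and `p₂/2` on each `aⱼ²` (`j ≥ 2`): these weights sum
to `p₂ (2 + q d - q) / (2q) = 1`, the geometric mean is `a₁^{p₂} ∏ aⱼ^{p₂} = λ^{p₂}`, and the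
arithmetic mean is at most `p₂ ((2/q) a₁^q + ∑ aⱼ²)`.
-/

open Finset

theorem Real.rpow_mul_prod_rpow_le_add_mul_sum {ι : Type*} (s : Finset ι) {x α β : ℝ}
    {y : ι → ℝ} (hx : 0 ≤ x) (hy : ∀ j ∈ s, 0 ≤ y j) (hα : 0 ≤ α) (hβ : 0 ≤ β)
    (hw : α + #s * β = 1) :
    x ^ α * ∏ j ∈ s, y j ^ β ≤ α * x + β * ∑ j ∈ s, y j := by
  have key := Real.geom_mean_le_arith_mean_weighted (insertNone s)
    (fun o => o.elim α fun _ => β) (fun o => o.elim x y)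
    (forall_mem_insertNone.mpr ⟨hα, fun _ _ => hβ⟩)
    (by simpa [sum_insertNone] using hw)
    (forall_mem_insertNone.mpr ⟨hx, hy⟩)
  simpa [prod_insertNone, sum_insertNone, mul_sum] using key

theorem Real.mul_prod_rpow_le_of_weights {ι : Type*} (s : Finset ι) {x p q : ℝ} {y : ι → ℝ}
    (hx : 0 ≤ x) (hy : ∀ j ∈ s, 0 ≤ y j) (hq : 0 < q) (hp : 0 ≤ p)
    (hw : p / q + #s * (p / 2) = 1) :
    (x * ∏ j ∈ s, y j) ^ p ≤ p / q * x ^ q + p / 2 * ∑ j ∈ s, y j ^ 2 := by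
  have hx_pow : (x ^ q) ^ (p / q) = x ^ p := by
    rw [← Real.rpow_mul hx, mul_div_cancel₀ _ hq.ne']
  have hy_pow : ∀ j ∈ s, (y j ^ 2) ^ (p / 2) = y j ^ p := fun j hj => by
    rw [← Real.rpow_natCast_mul (hy j hj), Nat.cast_ofNat, mul_div_cancel₀ _ two_ne_zero]
  calc (x * ∏ j ∈ s, y j) ^ p = (x ^ q) ^ (p / q) * ∏ j ∈ s, (y j ^ 2) ^ (p / 2) := by
        rw [Real.mul_rpow hx (prod_nonneg hy), ← Real.finsetProd_rpow _ _ hy, hx_pow,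
          prod_congr rfl hy_pow]
    _ ≤ p / q * x ^ q + p / 2 * ∑ j ∈ s, y j ^ 2 :=
        Real.rpow_mul_prod_rpow_le_add_mul_sum s (by positivity)
          (fun j _ => sq_nonneg (y j)) (by positivity) (by positivity) hw

/-- Scalar inequality behind the asymmetric regularizer (Theorem 2(b)):
for `q = 1/m`, `p₂ = 2q/(2+qd−q)`, and nonnegative reals with product `lam`,
`p₂ * ((2/q) * a 0 ^ q + ∑_{j=1}^{d-1} (a j)²) ≥ lam ^ p₂`. -/
theorem stmt_2 (m d : ℕ) (hm : 0 < m) (hd : 2 ≤ d) (q p₂ : ℝ)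
    (hq : q = 1 / m) (hp : p₂ = 2 * q / (2 + q * d - q))
    (a : ℕ → ℝ) (ha : ∀ j, 0 ≤ a j)
    (lam : ℝ) (hlam : lam = ∏ j ∈ Finset.range d, a j) :
    lam ^ p₂ ≤ p₂ * ((2 / q) * a 0 ^ q + ∑ j ∈ Finset.Ico 1 d, a j ^ (2 : ℕ)) := by
  have hq0 : 0 < q := by rw [hq]; positivity
  have hd1 : (1 : ℝ) ≤ d := by exact_mod_cast one_le_two.trans hd
  have hD : 0 < 2 + q * d - q := by nlinarith
  have hp0 : 0 < p₂ := by rw [hp]; positivity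
  have hlam_split : lam = a 0 * ∏ j ∈ Ico 1 d, a j := by
    rw [hlam, range_eq_Ico, prod_eq_prod_Ico_succ_bot (by omega)]
  have hw : p₂ / q + #(Ico 1 d) * (p₂ / 2) = 1 := by
    rw [Nat.card_Ico, Nat.cast_sub (by omega), hp]
    field_simp
    ring
  have hamgm := Real.mul_prod_rpow_le_of_weights (Ico 1 d) (ha 0) (fun j _ => ha j) hq0
    hp0.le hw
  have hsum : 0 ≤ ∑ j ∈ Ico 1 d, a j ^ 2 := sum_nonneg fun j _ => sq_nonneg (a j)
  have hx : 0 ≤ p₂ / q * a 0 ^ q := by have := Real.rpow_nonneg (ha 0) q; positivity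
  rw [hlam_split]
  calc _ ≤ _ := hamgm
    _ ≤ 2 * (p₂ / q * a 0 ^ q) + p₂ * ∑ j ∈ Ico 1 d, a j ^ 2 := by nlinarith
    _ = _ := by ring
end

section
/- Let s ≤ N be positive integers, and let X₁, …, X_s be drawn uniformly without replacement from a finite population {x₁, …, x_N} ⊂ [a, b] with mean u. Then for every t > 0, P(|(1/s)·∑_{i=1}^s X_i − u| ≥ t) ≤ 2·exp(−2st²/((1 − (s−1)/N)·(b − a)²)). -/
/-!
Serfling's martingale argument, run on exact counts. Extending an injective `k`-tuple `g` by one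
more draw, the new value is uniform on the `n - k` unused values, whose mean is
`(n u - S g) / (n - k)`. Hoeffding's lemma for this uniform distribution gives
`∑ⱼ exp (c (S (g, j) - (k + 1) u)) ≤ (n - k) exp ((b - a)² c² / 8) exp (c' (S g - k u))` with
`c' = c (n - k - 1) / (n - k)`, so by induction on `k` the moment generating function of the
centred sum of `k` draws is at most `exp ((b - a)² c² k (1 - (k - 1) / n) / 8)`. A Chernoff bound
on each tail finishes the proof.
-/

open Finset Real ProbabilityTheory MeasureTheory

theorem integral_uniformOn_univ {Ω : Type*} [Fintype Ω] [MeasurableSpace Ω]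
    [MeasurableSingletonClass Ω] (f : Ω → ℝ) :
    ∫ ω, f ω ∂(uniformOn (Set.univ : Set Ω)) = (∑ ω, f ω) / Fintype.card Ω := by
  rw [integral_fintype (.of_finite), sum_div]
  refine sum_congr rfl fun ω _ => ?_
  simp [Measure.real, uniformOn_univ, div_eq_inv_mul]

theorem Fintype.sum_exp_mul_le_of_mem_Icc {Ω : Type*} [Fintype Ω] [Nonempty Ω] {x : Ω → ℝ}
    {a b : ℝ} (hx : ∀ ω, x ω ∈ Set.Icc a b) (c : ℝ) :
    ∑ ω, exp (c * x ω) ≤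
      Fintype.card Ω * exp (c * ((∑ ω, x ω) / Fintype.card Ω) + (b - a) ^ 2 * c ^ 2 / 8) := by
  let _ : MeasurableSpace Ω := ⊤
  have hoeffding := (hasSubgaussianMGF_of_mem_Icc (μ := uniformOn Set.univ)
    Measurable.of_discrete.aemeasurable (.of_forall hx)).mgf_le c
  simp only [mgf, integral_uniformOn_univ, mul_sub, exp_sub, ← sum_div] at hoeffding
  rw [div_div, div_le_iff₀ (by positivity)] at hoeffding
  have hvar : (((‖b - a‖₊ / 2) ^ 2 : NNReal) : ℝ) * c ^ 2 / 2 = (b - a) ^ 2 * c ^ 2 / 8 := by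
    push_cast
    rw [Real.norm_eq_abs, div_pow, sq_abs]
    ring
  rw [hvar] at hoeffding
  rw [exp_add]
  linarith

theorem Finset.sum_exp_mul_le_of_mem_Icc {ι : Type*} {T : Finset ι} (hT : T.Nonempty)
    {x : ι → ℝ} {a b : ℝ} (hx : ∀ i ∈ T, x i ∈ Set.Icc a b) (c : ℝ) :
    ∑ i ∈ T, exp (c * x i) ≤ #T * exp (c * ((∑ i ∈ T, x i) / #T) + (b - a) ^ 2 * c ^ 2 / 8) := by
  have : Nonempty T := hT.to_subtype
  have h := Fintype.sum_exp_mul_le_of_mem_Icc (x := fun i : T => x i) (fun i => hx i i.2) c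
  rwa [sum_coe_sort T (fun i => exp (c * x i)), sum_coe_sort T x, Fintype.card_coe] at h

section InjTuples

variable {α : Type*} [Fintype α] [DecidableEq α]

variable (α) in
def injTuples (k : ℕ) : Finset (Fin k → α) := {f | Function.Injective f}

theorem sum_injTuples_succ {M : Type*} [AddCommMonoid M] {k : ℕ} (F : (Fin (k + 1) → α) → M) :
    ∑ f ∈ injTuples α (k + 1), F f =
      ∑ g ∈ injTuples α k, ∑ j ∈ (univ.image g)ᶜ, F (Fin.cons j g) := by
  simp only [injTuples, sum_filter]
  rw [← (Fin.consEquiv fun _ => α).sum_comp, Fintype.sum_prod_type, sum_comm]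
  refine sum_congr rfl fun g _ => ?_
  simp only [Fin.consEquiv, Equiv.coe_fn_mk, Fin.cons_injective_iff, ite_and, sum_ite_irrel,
    sum_const_zero, ← sum_filter]
  congr 2
  ext j
  simp

theorem card_compl_image_of_injective {k : ℕ} {g : Fin k → α} (hg : Function.Injective g) :
    #(univ.image g)ᶜ = Fintype.card α - k := by
  rw [card_compl, card_image_of_injective _ hg, card_univ, Fintype.card_fin]

theorem card_injTuples_succ (k : ℕ) :
    #(injTuples α (k + 1)) = (Fintype.card α - k) * #(injTuples α k) := by
  rw [card_eq_sum_ones, sum_injTuples_succ]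
  refine (sum_const_nat fun g hg => ?_).trans (mul_comm _ _)
  rw [← card_eq_sum_ones, card_compl_image_of_injective (mem_filter.1 hg).2]

end InjTuples

-- `(b - a) ^ 2 / 4 * serflingProxy n k` is the variance proxy of a sum of `k` draws without
-- replacement from `n` values in `[a, b]`; `1 - (k - 1) / n` is Serfling's finite-population
-- correction.
noncomputable def serflingProxy (n k : ℝ) : ℝ := k * (1 - (k - 1) / n)

theorem serflingProxy_nonneg {n k : ℝ} (hk : 0 ≤ k) (hkn : k ≤ n) : 0 ≤ serflingProxy n k :=
  mul_nonneg hk (sub_nonneg.2 (div_le_one_of_le₀ (by linarith) (hk.trans hkn)))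

theorem sq_mul_serflingProxy_add_one_le {n k : ℝ} (hk : 0 ≤ k) (hkn : k + 1 ≤ n) :
    ((n - k - 1) / (n - k)) ^ 2 * serflingProxy n k + 1 ≤ serflingProxy n (k + 1) := by
  have hm : 0 < n - k := by linarith
  have hn : 0 < n := by linarith
  have hgap : serflingProxy n (k + 1) - (((n - k - 1) / (n - k)) ^ 2 * serflingProxy n k + 1) =
      k * (n - k - 1) / (n * (n - k) ^ 2) := by
    unfold serflingProxy
    field_simp
    ring
  have : 0 ≤ k * (n - k - 1) / (n * (n - k) ^ 2) :=
    div_nonneg (mul_nonneg hk (by linarith)) (by positivity)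
  linarith

section Sampling

variable {α : Type*} [Fintype α] [DecidableEq α] {x : α → ℝ} {a b u : ℝ}

theorem sum_compl_exp_mul_sum_cons_sub_le (hx : ∀ i, x i ∈ Set.Icc a b)
    (hu : Fintype.card α * u = ∑ i, x i) {k : ℕ} (hk : k < Fintype.card α) {g : Fin k → α}
    (hg : Function.Injective g) (c : ℝ) :
    ∑ j ∈ (univ.image g)ᶜ,
        exp (c * (∑ i, x ((Fin.cons j g : Fin (k + 1) → α) i) - (k + 1 : ℕ) * u)) ≤
      (Fintype.card α - k) * exp ((b - a) ^ 2 * c ^ 2 / 8) *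
        exp (c * ((Fintype.card α - k - 1) / (Fintype.card α - k)) * (∑ i, x (g i) - k * u)) := by
  have hm : (0 : ℝ) < Fintype.card α - k := sub_pos.2 (by exact_mod_cast hk)
  set n : ℝ := (Fintype.card α : ℝ)
  set S := ∑ i, x (g i)
  have hcard : (#(univ.image g)ᶜ : ℝ) = n - k := by
    rw [card_compl_image_of_injective hg, Nat.cast_sub hk.le]
  have hsum : ∑ j ∈ (univ.image g)ᶜ, x j = n * u - S := by
    rw [hu, ← sum_compl_add_sum (univ.image g), sum_image fun _ _ _ _ h => hg h]
    ring
  have hne : (univ.image g)ᶜ.Nonempty := by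
    rw [← card_pos]
    exact_mod_cast hcard ▸ hm
  have hexp : c * (S - (k + 1) * u) + c * ((n * u - S) / (n - k)) =
      c * ((n - k - 1) / (n - k)) * (S - k * u) := by
    field_simp
    ring
  calc ∑ j ∈ (univ.image g)ᶜ,
        exp (c * (∑ i, x ((Fin.cons j g : Fin (k + 1) → α) i) - (k + 1 : ℕ) * u))
      = exp (c * (S - (k + 1) * u)) * ∑ j ∈ (univ.image g)ᶜ, exp (c * x j) := by
        rw [mul_sum]
        refine sum_congr rfl fun j _ => ?_
        rw [← exp_add, Fin.sum_univ_succ]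
        simp only [Fin.cons_zero, Fin.cons_succ, S]
        push_cast
        congr 1
        ring
    _ ≤ exp (c * (S - (k + 1) * u)) *
          ((n - k) * exp (c * ((n * u - S) / (n - k)) + (b - a) ^ 2 * c ^ 2 / 8)) := by
        rw [← hcard, ← hsum]
        gcongr
        exact sum_exp_mul_le_of_mem_Icc hne (fun i _ => hx i) c
    _ = (n - k) * exp ((b - a) ^ 2 * c ^ 2 / 8) * exp (c * ((n - k - 1) / (n - k)) * (S - k * u)) := by
        rw [← hexp, exp_add, exp_add]
        ring

theorem sum_exp_mul_sum_injTuples_sub_le (hx : ∀ i, x i ∈ Set.Icc a b)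
    (hu : Fintype.card α * u = ∑ i, x i) {k : ℕ} (hk : k ≤ Fintype.card α) (c : ℝ) :
    ∑ f ∈ injTuples α k, exp (c * (∑ i, x (f i) - k * u)) ≤
      #(injTuples α k) * exp ((b - a) ^ 2 * c ^ 2 * serflingProxy (Fintype.card α) k / 8) := by
  induction k generalizing c with
  | zero => simp [injTuples, serflingProxy]
  | succ k ih =>
    have hkn : (k : ℝ) + 1 ≤ Fintype.card α := by exact_mod_cast hk
    set n : ℝ := (Fintype.card α : ℝ)
    have hm : 0 < n - k := by linarith
    set r := (n - k - 1) / (n - k)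
    have hproxy : (b - a) ^ 2 * c ^ 2 / 8 + (b - a) ^ 2 * (c * r) ^ 2 * serflingProxy n k / 8 ≤
        (b - a) ^ 2 * c ^ 2 * serflingProxy n (k + 1 : ℕ) / 8 := by
      have := mul_le_mul_of_nonneg_left (sq_mul_serflingProxy_add_one_le k.cast_nonneg hkn)
        (by positivity : 0 ≤ (b - a) ^ 2 * c ^ 2 / 8)
      push_cast
      linarith
    calc ∑ f ∈ injTuples α (k + 1), exp (c * (∑ i, x (f i) - (k + 1 : ℕ) * u))
        = ∑ g ∈ injTuples α k, ∑ j ∈ (univ.image g)ᶜ,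
            exp (c * (∑ i, x ((Fin.cons j g : Fin (k + 1) → α) i) - (k + 1 : ℕ) * u)) :=
          sum_injTuples_succ _
      _ ≤ ∑ g ∈ injTuples α k,
            (n - k) * exp ((b - a) ^ 2 * c ^ 2 / 8) * exp (c * r * (∑ i, x (g i) - k * u)) :=
          sum_le_sum fun g hg => sum_compl_exp_mul_sum_cons_sub_le hx hu hk (mem_filter.1 hg).2 c
      _ = (n - k) * exp ((b - a) ^ 2 * c ^ 2 / 8) *
            ∑ g ∈ injTuples α k, exp (c * r * (∑ i, x (g i) - k * u)) :=
          (mul_sum _ _ _).symm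
      _ ≤ (n - k) * exp ((b - a) ^ 2 * c ^ 2 / 8) *
            (#(injTuples α k) * exp ((b - a) ^ 2 * (c * r) ^ 2 * serflingProxy n k / 8)) := by
          gcongr
          exact ih (by omega) (c * r)
      _ = #(injTuples α (k + 1)) * exp ((b - a) ^ 2 * c ^ 2 / 8 +
            (b - a) ^ 2 * (c * r) ^ 2 * serflingProxy n k / 8) := by
          rw [card_injTuples_succ, Nat.cast_mul, Nat.cast_sub (by omega), exp_add]
          ring
      _ ≤ _ := by gcongr

end Sampling

section Chernoff

variable {β : Type*} {A : Finset β} {X : β → ℝ} {σ ε : ℝ}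

theorem card_filter_le_le_mul_exp (hσ : 0 ≤ σ) (hε : 0 ≤ ε)
    (hX : ∀ c, ∑ f ∈ A, exp (c * X f) ≤ #A * exp (σ * c ^ 2 / 2)) :
    (#{f ∈ A | ε ≤ X f} : ℝ) ≤ #A * exp (-ε ^ 2 / (2 * σ)) := by
  rcases hσ.eq_or_lt with rfl | hσ
  · simpa using card_filter_le A _
  set c := ε / σ with hc
  have hmarkov : #{f ∈ A | ε ≤ X f} * exp (c * ε) ≤ ∑ f ∈ A, exp (c * X f) := by
    rw [← nsmul_eq_mul]
    refine (card_nsmul_le_sum _ _ _ fun f hf => ?_).trans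
      (sum_le_sum_of_subset_of_nonneg (filter_subset _ A) fun f _ _ => (exp_pos _).le)
    gcongr
    exact (mem_filter.1 hf).2
  have hexp : σ * c ^ 2 / 2 - c * ε = -ε ^ 2 / (2 * σ) := by
    rw [hc]
    field_simp
    ring
  rw [← hexp, exp_sub, mul_div_assoc', le_div_iff₀ (exp_pos _)]
  exact hmarkov.trans (hX c)

theorem card_filter_le_abs_le_mul_exp (hσ : 0 ≤ σ) (hε : 0 ≤ ε)
    (hX : ∀ c, ∑ f ∈ A, exp (c * X f) ≤ #A * exp (σ * c ^ 2 / 2)) :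
    (#{f ∈ A | ε ≤ |X f|} : ℝ) ≤ 2 * #A * exp (-ε ^ 2 / (2 * σ)) := by
  classical
  have hsplit : {f ∈ A | ε ≤ |X f|} ⊆ {f ∈ A | ε ≤ X f} ∪ {f ∈ A | ε ≤ -X f} := by
    intro f
    simp only [mem_filter, mem_union, le_abs]
    tauto
  have hneg : ∀ c, ∑ f ∈ A, exp (c * -X f) ≤ #A * exp (σ * c ^ 2 / 2) := fun c => by
    simpa only [neg_mul_comm, neg_sq] using hX (-c)
  calc (#{f ∈ A | ε ≤ |X f|} : ℝ)
      ≤ #{f ∈ A | ε ≤ X f} + #{f ∈ A | ε ≤ -X f} := by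
        exact_mod_cast (card_le_card hsplit).trans (card_union_le _ _)
    _ ≤ #A * exp (-ε ^ 2 / (2 * σ)) + #A * exp (-ε ^ 2 / (2 * σ)) :=
        add_le_add (card_filter_le_le_mul_exp hσ hε hX) (card_filter_le_le_mul_exp hσ hε hneg)
    _ = 2 * #A * exp (-ε ^ 2 / (2 * σ)) := by ring

end Chernoff

open Finset in
/-- Hoeffding inequality for sampling without replacement: drawing `s` samples
uniformly without replacement (an injective function `Fin s → Fin N` chosen
uniformly) from a population `x : Fin N → ℝ` lying in `[a, b]` with mean `u`,
the probability that the sample mean deviates from `u` by at least `t` is at most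
`2·exp(−2st²/((1 − (s−1)/N)(b − a)²))`. -/
theorem stmt_16 (s N : ℕ) (hs : 0 < s) (hsN : s ≤ N)
    (x : Fin N → ℝ) (a b u : ℝ)
    (hab : ∀ i, a ≤ x i ∧ x i ≤ b)
    (hu : u = (1 / N) * ∑ i, x i)
    (t : ℝ) (ht : 0 < t) :
    (((univ.filter (fun f : Fin s → Fin N => Function.Injective f ∧
          t ≤ |(1 / s) * (∑ i, x (f i)) - u|)).card : ℝ)) /
        ((univ.filter (fun f : Fin s → Fin N => Function.Injective f)).card : ℝ) ≤
      2 * Real.exp (-(2 * s * t ^ 2) /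
        ((1 - ((s : ℝ) - 1) / N) * (b - a) ^ 2)) := by
  have hsR : (0 : ℝ) < s := by exact_mod_cast hs
  have hsNR : (s : ℝ) ≤ N := by exact_mod_cast hsN
  have hNu : (Fintype.card (Fin N) : ℝ) * u = ∑ i, x i := by
    rw [hu, Fintype.card_fin]
    field_simp [(hsR.trans_le hsNR).ne']
  have hmgf (c : ℝ) : ∑ f ∈ injTuples (Fin N) s, exp (c * (∑ i, x (f i) - s * u)) ≤
      #(injTuples (Fin N) s) * exp ((b - a) ^ 2 / 4 * serflingProxy N s * c ^ 2 / 2) := by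
    refine (sum_exp_mul_sum_injTuples_sub_le hab hNu (by simpa using hsN) c).trans_eq ?_
    rw [Fintype.card_fin]
    congr 2
    ring
  have hdev : univ.filter (fun f : Fin s → Fin N =>
        Function.Injective f ∧ t ≤ |(1 / s) * (∑ i, x (f i)) - u|) =
      (injTuples (Fin N) s).filter (fun f => s * t ≤ |∑ i, x (f i) - s * u|) := by
    rw [injTuples, filter_filter]
    refine filter_congr fun f _ => and_congr_right fun _ => ?_
    rw [show ∑ i, x (f i) - s * u = s * ((1 / s) * ∑ i, x (f i) - u) by field_simp,
      abs_mul, abs_of_pos hsR, mul_le_mul_iff_right₀ hsR]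
  rw [hdev]
  refine div_le_of_le_mul₀ (Nat.cast_nonneg _) (by positivity) ?_
  refine (card_filter_le_abs_le_mul_exp (by have := serflingProxy_nonneg hsR.le hsNR; positivity)
    (by positivity) hmgf).trans_eq ?_
  rw [serflingProxy, show 2 * ((b - a) ^ 2 / 4 * (s * (1 - (s - 1) / N))) =
    s * ((1 - (s - 1) / N) * (b - a) ^ 2) / 2 by ring]
  generalize (1 - ((s : ℝ) - 1) / N) * (b - a) ^ 2 = W
  rw [show -(s * t) ^ 2 / (s * W / 2) = s * -(2 * s * t ^ 2) / (s * W) by ring,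
    mul_div_mul_left _ _ hsR.ne', injTuples]
  ring
end
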